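/- Let λ = [1^j, n−j] be a hook partition of n and r ≥ 0 an integer. Then 𝔠_{λ,r} / f^λ = ∑_{d=0}^r (−1)^d C(r,d) C(r−d+n−j−1, n), where f^λ is the dimension of the irreducible representation of S_n indexed by λ, 𝔪_{λ,m} = ∏_{u∈λ} (m + c(u))/h(u), and 𝔠_{λ,m} = ∑_{d=0}^m (−1)^d C(m,d) 𝔪_{λ,m−d}. -/

import Mathlib

open Equiv Finset

noncomputable section
open scoped Classical

/-- The cycle type of a permutation of `Fin n`, including fixed points (parts equal to 1). -/
def fullCycleType {n : ℕ} (σ : Equiv.Perm (Fin n)) : Multiset ℕ :=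
  σ.cycleType + Multiset.replicate (n - σ.cycleType.sum) 1

/-- `κ(σ)`: the number of cycles of a permutation, fixed points counting as cycles. -/
def kappa {n : ℕ} (σ : Equiv.Perm (Fin n)) : ℕ := (fullCycleType σ).card

/-- The parts of a partition sorted in weakly decreasing order. -/
def sortedParts {n : ℕ} (lam : Nat.Partition n) : List ℕ := (lam.parts.sort (· ≤ ·)).reverse

/-- `λ_i`, the `i`-th part (0-indexed) of a partition, `0` if `i` is too large. -/
def partFn {n : ℕ} (lam : Nat.Partition n) (i : ℕ) : ℕ := (sortedParts lam).getD i 0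

/-- The `j`-th part of the conjugate partition. -/
def conjFn {n : ℕ} (lam : Nat.Partition n) (j : ℕ) : ℕ :=
  ((Finset.range n).filter fun i => j < partFn lam i).card

/-- The cells `(i, j)` (row, column; 0-indexed) of the Young diagram of a partition of `n`. -/
def cells {n : ℕ} (lam : Nat.Partition n) : Finset (ℕ × ℕ) :=
  (Finset.range n ×ˢ Finset.range n).filter fun c => c.2 < partFn lam c.1

/-- The hook length `h(u)` of a cell `u = (i, j)` of a partition. -/
def hookLen {n : ℕ} (lam : Nat.Partition n) (c : ℕ × ℕ) : ℕ :=
  partFn lam c.1 - c.2 + (conjFn lam c.2 - c.1) - 1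

/-- The content `c(u) = j - i` of a cell `u = (i, j)`. -/
def content (c : ℕ × ℕ) : ℚ := (c.2 : ℚ) - (c.1 : ℚ)

/-- `f^λ`, the dimension of the irreducible representation of `S_n` indexed by `λ`,
given by the hook length formula. -/
def fdim {n : ℕ} (lam : Nat.Partition n) : ℚ :=
  (n.factorial : ℚ) / ∏ c ∈ cells lam, (hookLen lam c : ℚ)

/-- `𝔪_{λ,m} = ∏_{u∈λ} (m + c(u))/h(u)`. -/
def mfrak {n : ℕ} (lam : Nat.Partition n) (m : ℕ) : ℚ :=
  ∏ c ∈ cells lam, (((m : ℚ) + content c) / (hookLen lam c : ℚ))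

/-- `𝔠_{λ,m} = ∑_{d=0}^m (−1)^d C(m,d) 𝔪_{λ,m−d}`. -/
def cfrak {n : ℕ} (lam : Nat.Partition n) (m : ℕ) : ℚ :=
  ∑ d ∈ Finset.range (m + 1), (-1 : ℚ) ^ d * (m.choose d : ℚ) * mfrak lam (m - d)

/-- The signless Stirling number of the first kind: the number of permutations
of `[n]` with exactly `k` cycles. -/
def stirl (n k : ℕ) : ℕ := Fintype.card {σ : Equiv.Perm (Fin n) // kappa σ = k}

/-- `|C_μ|`: the number of permutations of `Fin n` of cycle type `μ`. -/
def classCard {n : ℕ} (mu : Nat.Partition n) : ℕ :=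
  Fintype.card {σ : Equiv.Perm (Fin n) // fullCycleType σ = mu.parts}

/-- power sum symmetric polynomial `p_k = ∑ x_i^k`. -/
def powSum (n k : ℕ) : MvPolynomial (Fin n) ℤ := ∑ i : Fin n, MvPolynomial.X i ^ k

/-- Vandermonde product `∏_{i<j} (x_i - x_j)`. -/
def vdm (n : ℕ) : MvPolynomial (Fin n) ℤ :=
  ∏ p ∈ Finset.univ.filter (fun p : Fin n × Fin n => p.1 < p.2),
    (MvPolynomial.X p.1 - MvPolynomial.X p.2)

/-- The irreducible character `χ^λ` of `S_n` evaluated on the conjugacy class of cycle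
type `μ`, via the Frobenius character formula: `χ^λ(μ)` is the coefficient of the
monomial `x^{λ+δ}` in `∏_{i<j}(x_i-x_j) ⬝ ∏_k p_{μ_k}`, where `δ = (n-1, n-2, …, 0)`. -/
def chi {n : ℕ} (lam mu : Nat.Partition n) : ℤ :=
  MvPolynomial.coeff
    (Finsupp.equivFunOnFinite.symm fun i : Fin n => partFn lam i + (n - 1 - (i : ℕ)))
    (vdm n * (mu.parts.map (powSum n)).prod)

/-- The partition `[1^n]` of `n`. -/
def ones (n : ℕ) : Nat.Partition n :=
  ⟨Multiset.replicate n 1, by intro i hi; simp_all [Multiset.eq_of_mem_replicate hi], by simp⟩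

/-- The generalized (polynomial) binomial coefficient `C(x, m) = x(x-1)⋯(x-m+1)/m!`. -/
def qchoose (x : ℚ) (m : ℕ) : ℚ := (∏ s ∈ Finset.range m, (x - (s : ℚ))) / (m.factorial : ℚ)


/-! For a hook `[1^j, n-j]` the contents are `n-j-1, n-j-2, …, -j`, each once, so
`∏_u (m + c(u))` is the falling factorial `(m+n-j-1)(m+n-j-2)⋯(m-j) = n! C(m+n-j-1, n)`, which
also covers `m ≤ j`, where both sides vanish. As hook lengths are positive, the hook product
cancels in `𝔪_{λ,m}/f^λ = ∏_u (m + c(u)) / n!`, and the identity follows term by term. -/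

open Nat

section Cells

variable {n : ℕ} (lam : Nat.Partition n)

theorem partFn_antitone : Antitone (partFn lam) := by
  intro a b hab
  have hsorted : (sortedParts lam).Pairwise (· ≥ ·) := by
    simp [sortedParts, List.pairwise_reverse]
  unfold partFn
  by_cases hb : b < (sortedParts lam).length
  · rw [List.getD_eq_getElem _ _ hb, List.getD_eq_getElem _ _ (hab.trans_lt hb)]
    rcases hab.lt_or_eq with hlt | rfl
    · exact List.pairwise_iff_getElem.mp hsorted _ _ _ _ hlt
    · rfl
  · rw [List.getD_eq_default _ _ (not_lt.mp hb)]
    exact Nat.zero_le _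

theorem lt_conjFn_of_mem_cells {c : ℕ × ℕ} (hc : c ∈ cells lam) : c.1 < conjFn lam c.2 := by
  simp only [cells, mem_filter, mem_product, mem_range] at hc
  obtain ⟨⟨hrow, -⟩, hcol⟩ := hc
  have hsub : range (c.1 + 1) ⊆ (range n).filter fun i => c.2 < partFn lam i := by
    intro i hi
    rw [mem_range] at hi
    exact mem_filter.mpr
      ⟨mem_range.mpr (by omega), hcol.trans_le (partFn_antitone lam (by omega))⟩
  simpa [conjFn] using card_le_card hsub

theorem hookLen_pos {c : ℕ × ℕ} (hc : c ∈ cells lam) : 0 < hookLen lam c := by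
  have harm : c.2 < partFn lam c.1 := (mem_filter.mp hc).2
  have hleg := lt_conjFn_of_mem_cells lam hc
  unfold hookLen
  omega

theorem mfrak_div_fdim (m : ℕ) :
    mfrak lam m / fdim lam = (∏ c ∈ cells lam, ((m : ℚ) + content c)) / n ! := by
  have hH : ∏ c ∈ cells lam, (hookLen lam c : ℚ) ≠ 0 :=
    prod_ne_zero_iff.mpr fun c hc => by exact_mod_cast (hookLen_pos lam hc).ne'
  rw [mfrak, fdim, prod_div_distrib]
  field_simp

end Cells

section Hook

variable {n j : ℕ} {lam : Nat.Partition n}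

theorem sortedParts_hook (hj : j < n) (hlam : lam.parts = Multiset.replicate j 1 + {n - j}) :
    sortedParts lam = (n - j) :: List.replicate j 1 := by
  have hperm : (lam.parts.sort (· ≤ ·)).Perm (List.replicate j 1 ++ [n - j]) := by
    rw [← Multiset.coe_eq_coe, Multiset.sort_eq, hlam, ← Multiset.coe_add,
      ← Multiset.coe_replicate, ← Multiset.coe_singleton]
  have hsorted : (List.replicate j 1 ++ [n - j]).Pairwise (· ≤ ·) := by
    simp only [List.pairwise_append, List.pairwise_replicate, List.pairwise_singleton,
      List.mem_singleton]
    exact ⟨by simp, trivial, fun a ha b hb => by rw [List.eq_of_mem_replicate ha, hb]; omega⟩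
  simp [sortedParts, hperm.eq_of_pairwise' (Multiset.pairwise_sort _ _) hsorted]

theorem partFn_hook (hj : j < n) (hlam : lam.parts = Multiset.replicate j 1 + {n - j}) (i : ℕ) :
    partFn lam i = if i = 0 then n - j else if i ≤ j then 1 else 0 := by
  rw [partFn, sortedParts_hook hj hlam]
  rcases i with _ | k
  · simp
  · rw [List.getD_cons_succ, List.getD_eq_getElem?_getD, List.getElem?_replicate,
      if_neg (Nat.add_one_ne_zero k)]
    split_ifs <;> first | rfl | omega

/-- The cells of the hook `[1^j, n-j]` listed by decreasing content: `k` is sent to the cell of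
content `n - j - 1 - k`, first along the arm, then down the leg. -/
def hookCell (n j k : ℕ) : ℕ × ℕ :=
  if k < n - j then (0, n - j - 1 - k) else (k + j + 1 - n, 0)

theorem cells_hook (hj : j < n) (hlam : lam.parts = Multiset.replicate j 1 + {n - j}) :
    cells lam = (range n).image (hookCell n j) := by
  ext ⟨a, b⟩
  simp only [cells, mem_filter, mem_product, mem_range, mem_image, partFn_hook hj hlam, hookCell]
  constructor
  · rintro ⟨-, hcell⟩
    refine ⟨if a = 0 then n - j - 1 - b else a + n - j - 1, ?_⟩
    split_ifs at hcell ⊢ <;> simp only [Prod.mk.injEq] <;> omega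
  · rintro ⟨k, hk, hcell⟩
    split_ifs at hcell <;> simp only [Prod.mk.injEq] at hcell <;> split_ifs <;> omega

theorem hookCell_injOn : Set.InjOn (hookCell n j) (range n) := by
  intro k _ l _ hkl
  simp only [hookCell] at hkl
  split_ifs at hkl <;> simp only [Prod.mk.injEq] at hkl <;> omega

theorem add_content_hookCell (hj : j < n) (m k : ℕ) :
    (m : ℚ) + content (hookCell n j k) = ((m + n - j - 1 : ℕ) : ℚ) - k := by
  unfold hookCell content
  simp only [Nat.sub_sub]
  split_ifs with harm
  · push_cast [Nat.cast_sub (show j + 1 + k ≤ n by omega),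
      Nat.cast_sub (show j + 1 ≤ m + n by omega)]
    ring
  · push_cast [Nat.cast_sub (show n ≤ k + j + 1 by omega),
      Nat.cast_sub (show j + 1 ≤ m + n by omega)]
    ring

theorem prod_add_content_hook (hj : j < n) (hlam : lam.parts = Multiset.replicate j 1 + {n - j})
    (m : ℕ) :
    ∏ c ∈ cells lam, ((m : ℚ) + content c) = n ! * (m + n - j - 1).choose n := by
  rw [cells_hook hj hlam, prod_image hookCell_injOn,
    prod_congr rfl fun k _ => add_content_hookCell hj m k,
    ← descPochhammer_eval_eq_prod_range, descPochhammer_eval_eq_descFactorial,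
    descFactorial_eq_factorial_mul_choose, Nat.cast_mul]

end Hook

/-- `𝔠_{λ,r}/f^λ` for a hook `λ = [1^j, n-j]`. -/
theorem stmt6 (n j r : ℕ) (hj : j + 1 ≤ n) (lam : Nat.Partition n)
    (hlam : lam.parts = Multiset.replicate j 1 + {n - j}) :
    cfrak lam r / fdim lam =
      ∑ d ∈ Finset.range (r + 1),
        (-1 : ℚ) ^ d * (r.choose d : ℚ) * ((r - d + n - j - 1).choose n : ℚ) := by
  rw [cfrak, sum_div]
  refine sum_congr rfl fun d _ => ?_
  rw [mul_div_assoc, mfrak_div_fdim, prod_add_content_hook hj hlam,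
    mul_div_cancel_left₀ _ (by positivity)]
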